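/- Let F be an algebraically closed field of characteristic 0. Every 2-local automorphism of Mₙ(F) is an automorphism. -/

import Mathlib

/-!
Every automorphism of `Mₙ(F)` preserves the trace, so a 2-local automorphism `φ` satisfies
`tr (φ A * φ B) = tr (A * B)`; as the trace form is nondegenerate, this alone forces `φ` to be
linear. A unital linear map preserving zero products is multiplicative on the left by
idempotents `e` (use `e * (x - e * x) = 0` and `(1 - e) * (e * x) = 0`), and idempotents span
`Mₙ(F)`, so `φ` is an algebra endomorphism. It is injective by 2-locality, hence bijective.
-/

open Matrix

def IsTwoLocalAlgEquiv (R : Type*) {A : Type*} [CommSemiring R] [Semiring A] [Algebra R A]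
    (φ : A → A) : Prop :=
  ∀ a b : A, ∃ ψ : A ≃ₐ[R] A, φ a = ψ a ∧ φ b = ψ b

namespace IsTwoLocalAlgEquiv

variable {R A : Type*} [CommSemiring R] [Semiring A] [Algebra R A] {φ : A → A}

theorem map_zero (hφ : IsTwoLocalAlgEquiv R φ) : φ 0 = 0 := by
  obtain ⟨ψ, h, -⟩ := hφ 0 0
  rw [h, _root_.map_zero]

theorem map_one (hφ : IsTwoLocalAlgEquiv R φ) : φ 1 = 1 := by
  obtain ⟨ψ, h, -⟩ := hφ 1 1
  rw [h, _root_.map_one]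

theorem injective (hφ : IsTwoLocalAlgEquiv R φ) : Function.Injective φ := fun a b hab => by
  obtain ⟨ψ, ha, hb⟩ := hφ a b
  exact ψ.injective (ha.symm.trans (hab.trans hb))

theorem map_mul_map_eq_zero (hφ : IsTwoLocalAlgEquiv R φ) {a b : A} (hab : a * b = 0) :
    φ a * φ b = 0 := by
  obtain ⟨ψ, ha, hb⟩ := hφ a b
  rw [ha, hb, ← _root_.map_mul, hab, _root_.map_zero]

end IsTwoLocalAlgEquiv

namespace LinearMap.BilinForm

variable {K V : Type*} [Field K] [AddCommGroup V] [Module K V] [FiniteDimensional K V]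
  {B : LinearMap.BilinForm K V} {f : V → V}

theorem Nondegenerate.span_range_eq_top_of_apply_eq (hB : B.Nondegenerate)
    (hf : ∀ x y, B (f x) (f y) = B x y) : Submodule.span K (Set.range f) = ⊤ := by
  classical
  let b := Module.finBasis K V
  let d := B.dualBasis hB b
  have hli : LinearIndependent K (f ∘ d) := by
    rw [Fintype.linearIndependent_iff]
    intro g hg i
    simpa [hf, d, apply_dualBasis_left] using congr_arg (fun v => B v (f (b i))) hg
  refine eq_top_mono (Submodule.span_mono (Set.range_comp_subset_range d f))
    (hli.span_eq_top_of_card_eq_finrank' ?_)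
  simp

theorem Nondegenerate.isLinearMap_of_apply_eq (hB : B.Nondegenerate)
    (hf : ∀ x y, B (f x) (f y) = B x y) : IsLinearMap K f := by
  have hsep : ∀ w, (∀ y, B w (f y) = 0) → w = 0 := fun w hw =>
    hB.1 w fun v => by
      rw [LinearMap.ext_on_range (hB.span_range_eq_top_of_apply_eq hf) (g := 0) hw]
      rfl
  constructor
  · intro x y
    rw [← sub_eq_zero, sub_add_eq_sub_sub]
    exact hsep _ fun z => by simp [hf]
  · intro c x
    rw [← sub_eq_zero]
    exact hsep _ fun z => by simp [hf]

end LinearMap.BilinForm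

namespace Matrix

variable {m K : Type*} [Fintype m] [Field K]

def traceMulForm : LinearMap.BilinForm K (Matrix m m K) :=
  (LinearMap.mul K _).compr₂ (traceLinearMap m K K)

@[simp]
theorem traceMulForm_apply (A B : Matrix m m K) : traceMulForm A B = (A * B).trace := rfl

theorem traceMulForm_nondegenerate :
    (traceMulForm : LinearMap.BilinForm K (Matrix m m K)).Nondegenerate :=
  ⟨fun A hA => ext_iff_trace_mul_right.mpr fun X => by simpa using hA X,
    fun A hA => ext_iff_trace_mul_left.mpr fun X => by simpa using hA X⟩

end Matrix

section Multiplicative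

variable {R A B : Type*} [CommSemiring R] [Ring A] [Ring B] [Algebra R A] [Algebra R B]

theorem AddMonoidHom.map_mul_of_isIdempotentElem (f : A →+ B) (h1 : f 1 = 1)
    (h0 : ∀ a b, a * b = 0 → f a * f b = 0) {e : A} (he : IsIdempotentElem e) (x : A) :
    f (e * x) = f e * f x := by
  have hleft := h0 e (x - e * x) (by rw [mul_sub, ← mul_assoc, he.eq, sub_self])
  have hright := h0 (1 - e) (e * x) (by rw [sub_mul, one_mul, ← mul_assoc, he.eq, sub_self])
  rw [map_sub, mul_sub, sub_eq_zero] at hleft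
  rw [map_sub, h1, sub_mul, one_mul, sub_eq_zero] at hright
  rw [hleft]
  exact hright

theorem LinearMap.map_mul_of_span_isIdempotentElem_eq_top (f : A →ₗ[R] B) (h1 : f 1 = 1)
    (h0 : ∀ a b, a * b = 0 → f a * f b = 0)
    (hspan : Submodule.span R {e : A | IsIdempotentElem e} = ⊤) (a b : A) :
    f (a * b) = f a * f b := by
  have ha : a ∈ Submodule.span R {e : A | IsIdempotentElem e} := hspan ▸ Submodule.mem_top
  induction ha using Submodule.span_induction with
  | mem e he => exact f.toAddMonoidHom.map_mul_of_isIdempotentElem h1 h0 he b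
  | zero => simp
  | add x y _ _ hx hy => rw [add_mul, map_add, map_add, hx, hy, add_mul]
  | smul c x _ hx => rw [smul_mul_assoc, map_smul, map_smul, hx, smul_mul_assoc]

end Multiplicative

theorem Matrix.span_isIdempotentElem_eq_top {n R : Type*} [Fintype n] [DecidableEq n] [Ring R] :
    Submodule.span R {e : Matrix n n R | IsIdempotentElem e} = ⊤ := by
  rw [eq_top_iff, ← (Matrix.stdBasis R n n).span_eq, Submodule.span_le]
  rintro _ ⟨⟨i, j⟩, rfl⟩
  have hii : IsIdempotentElem (single i i (1 : R)) := by
    rw [IsIdempotentElem, single_mul_single_same, one_mul]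
  rw [stdBasis_eq_single]
  by_cases hij : i = j
  · subst hij
    exact Submodule.subset_span hii
  -- `single i j 1 = (single i i 1 + single i j 1) - single i i 1` is a difference of idempotents
  have hij' : IsIdempotentElem (single i i (1 : R) + single i j 1) := by
    rw [IsIdempotentElem, add_mul, mul_add, mul_add, hii.eq, single_mul_single_same, one_mul,
      single_mul_single_of_ne _ _ _ _ (Ne.symm hij), single_mul_single_of_ne _ _ _ _ (Ne.symm hij),
      add_zero, add_zero]
  simpa using Submodule.sub_mem _ (Submodule.subset_span (s := {e | IsIdempotentElem e}) hij')
    (Submodule.subset_span hii)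

namespace IsTwoLocalAlgEquiv

variable {m K : Type*} [Fintype m] [DecidableEq m] [Field K] {φ : Matrix m m K → Matrix m m K}

theorem trace_map_mul_map (hφ : IsTwoLocalAlgEquiv K φ) (A B : Matrix m m K) :
    (φ A * φ B).trace = (A * B).trace := by
  obtain ⟨ψ, hA, hB⟩ := hφ A B
  rw [hA, hB, ← _root_.map_mul, Matrix.trace_map]

theorem isLinearMap (hφ : IsTwoLocalAlgEquiv K φ) : IsLinearMap K φ :=
  Matrix.traceMulForm_nondegenerate.isLinearMap_of_apply_eq hφ.trace_map_mul_map

theorem exists_algEquiv (hφ : IsTwoLocalAlgEquiv K φ) :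
    ∃ ψ : Matrix m m K ≃ₐ[K] Matrix m m K, ⇑ψ = φ := by
  let L := hφ.isLinearMap.mk' φ
  let Φ := AlgHom.ofLinearMap L hφ.map_one
    (L.map_mul_of_span_isIdempotentElem_eq_top hφ.map_one (fun _ _ => hφ.map_mul_map_eq_zero)
      Matrix.span_isIdempotentElem_eq_top)
  have hinj : Function.Injective L := hφ.injective
  exact ⟨AlgEquiv.ofBijective Φ ⟨hinj, LinearMap.injective_iff_surjective.mp hinj⟩, rfl⟩

end IsTwoLocalAlgEquiv

theorem stmt_8_general {F : Type*} [Field F] (n : ℕ)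
    (φ : Matrix (Fin n) (Fin n) F → Matrix (Fin n) (Fin n) F)
    (h2loc : ∀ A B : Matrix (Fin n) (Fin n) F,
      ∃ ψ : Matrix (Fin n) (Fin n) F ≃ₐ[F] Matrix (Fin n) (Fin n) F,
        φ A = ψ A ∧ φ B = ψ B) :
    ∃ ψ : Matrix (Fin n) (Fin n) F ≃ₐ[F] Matrix (Fin n) (Fin n) F,
      ∀ A, φ A = ψ A := by
  obtain ⟨ψ, hψ⟩ := IsTwoLocalAlgEquiv.exists_algEquiv h2loc
  exact ⟨ψ, fun A => by rw [hψ]⟩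

theorem stmt_8 {F : Type*} [Field F] [IsAlgClosed F] [CharZero F] (n : ℕ)
    (φ : Matrix (Fin n) (Fin n) F → Matrix (Fin n) (Fin n) F)
    (h2loc : ∀ A B : Matrix (Fin n) (Fin n) F,
      ∃ ψ : Matrix (Fin n) (Fin n) F ≃ₐ[F] Matrix (Fin n) (Fin n) F,
        φ A = ψ A ∧ φ B = ψ B) :
    ∃ ψ : Matrix (Fin n) (Fin n) F ≃ₐ[F] Matrix (Fin n) (Fin n) F,
      ∀ A, φ A = ψ A :=
  stmt_8_general n φ h2loc
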